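/- arXiv:2012.08232 — 2 statements merged into one kernel-verified Lean document; each statement's English description precedes it below -/
import Mathlib

section
/- Let q be an odd prime. If A ⊆ F_q^n contains no triangle with all right angles, i.e., no three distinct vectors x, y, z with ⟨x−y, y−z⟩ = ⟨y−z, z−x⟩ = ⟨z−x, x−y⟩ = 0, then |A| ≤ C(n+2q−1, 2q−2) + 2·C(n+q, q−1). -/
/-!
Over `𝔽_q` with `q` odd, polarization shows that a triangle has three right angles exactly when
its three sides are isotropic. Let `D(x, y) = 1 - ⟨x - y, x - y⟩ ^ (q - 1)` be the indicator of
`x - y` being isotropic. On a set `A` without such triangles the tensor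
`D(x,y) D(y,z) D(z,x) (1 - δ(x,y) - δ(y,z) - δ(z,x))` is `-2` times the diagonal, so by Tao's slice
rank argument `|A|` is at most the sum of the dimensions of three spaces containing its slices.
Regarding `⟨x, x⟩` as one extra variable of degree one, `D(·, c)` is a polynomial of degree `q - 1`
in `n + 1` variables, which yields the two binomial coefficients.
-/

open Finset Module Matrix Submodule MvPolynomial

section Matrix

variable {K : Type*} [Field K]

theorem Matrix.rank_add_le {m n : Type*} [Fintype n] (M N : Matrix m n K) :
    (M + N).rank ≤ M.rank + N.rank := by
  rw [Matrix.rank, mulVecLin_add]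
  exact (Submodule.finrank_mono (LinearMap.range_add_le _ _)).trans
    (Submodule.finrank_add_le_finrank_add_finrank _ _)

theorem Matrix.rank_le_finrank_of_col_mem {m n : Type*} [Fintype n] {M : Matrix m n K}
    {W : Submodule K (m → K)} [FiniteDimensional K W] (h : ∀ j, M.col j ∈ W) :
    M.rank ≤ finrank K W := by
  rw [rank_eq_finrank_span_cols]
  exact Submodule.finrank_mono (Submodule.span_le.2 (Set.range_subset_iff.2 h))

theorem Matrix.rank_le_finrank_of_row_mem {m n : Type*} [Fintype m] [Fintype n]
    {M : Matrix m n K} {W : Submodule K (n → K)} [FiniteDimensional K W] (h : ∀ i, M.row i ∈ W) :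
    M.rank ≤ finrank K W := by
  rw [← rank_transpose]
  exact rank_le_finrank_of_col_mem h

end Matrix

section SliceRank

variable {K A : Type*} [Field K] [Fintype A]

theorem Submodule.exists_mem_finrank_le_card_support [DecidableEq K]
    (U : Submodule K (A → K)) : ∃ u ∈ U, finrank K U ≤ #{a | u a ≠ 0} := by
  classical
  obtain ⟨S, hS, hmax⟩ := ((univ : Finset (Finset A)).filter
    fun S => ∃ u ∈ U, ({a | u a ≠ 0} : Finset A) = S).exists_max_image card
    ⟨∅, mem_filter.2 ⟨mem_univ _, 0, U.zero_mem, by simp⟩⟩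
  obtain ⟨u, hu, rfl⟩ := (mem_filter.1 hS).2
  refine ⟨u, hu, not_lt.1 fun hlt => ?_⟩
  -- `u` has maximal support. Some nonzero `v ∈ U` vanishes on that support, and then `u + v`
  -- would have a larger one.
  let restrict : U →ₗ[K] ({a | u a ≠ 0} : Finset A) → K :=
    LinearMap.funLeft K K Subtype.val ∘ₗ U.subtype
  obtain ⟨⟨v, hvU⟩, hv, hv0⟩ := Submodule.exists_mem_ne_zero_of_ne_bot
    (LinearMap.ker_ne_bot_of_finrank_lt (f := restrict)
      (by rwa [finrank_fintype_fun_eq_card, Fintype.card_coe]))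
  have hvS : ∀ a, u a ≠ 0 → v a = 0 := fun a ha => congrFun hv ⟨a, by simpa using ha⟩
  obtain ⟨b, hb⟩ : ∃ b, v b ≠ 0 := by
    by_contra! h
    exact hv0 (Subtype.ext (funext h))
  have hub : u b = 0 := by
    by_contra hub
    exact hb (hvS b hub)
  have hlarger : ({a | u a ≠ 0} : Finset A) ⊂ ({a | (u + v) a ≠ 0} : Finset A) := by
    refine ssubset_iff_of_subset (fun a ha => ?_) |>.2 ⟨b, by simp [hub, hb]⟩
    simp only [mem_filter, mem_univ, true_and, Pi.add_apply] at ha ⊢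
    rwa [hvS a ha, add_zero]
  exact (hmax _ (mem_filter.2 ⟨mem_univ _, u + v, U.add_mem hu hvU, rfl⟩)).not_gt
    (card_lt_card hlarger)

theorem Submodule.exists_dotProduct_eq_zero_card_le [DecidableEq K]
    (W : Submodule K (A → K)) :
    ∃ u : A → K, (∀ f ∈ W, u ⬝ᵥ f = 0) ∧ Fintype.card A ≤ finrank K W + #{a | u a ≠ 0} := by
  classical
  let U := W.dualAnnihilator.map (dotProductEquiv K A).symm.toLinearMap
  have hU : finrank K W + finrank K U = Fintype.card A := by
    rw [← finrank_fintype_fun_eq_card K, ← Subspace.finrank_add_finrank_dualAnnihilator_eq W,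
      LinearEquiv.finrank_map_eq]
  obtain ⟨u, hu, hsupp⟩ := U.exists_mem_finrank_le_card_support
  rw [Submodule.mem_map_equiv, LinearEquiv.symm_symm] at hu
  exact ⟨u, fun f hf => (Submodule.mem_dualAnnihilator _).1 hu f hf, by omega⟩

theorem Submodule.sum_mul_apply_mem {B : Type*} {W : Submodule K (B → K)} (u : A → K)
    {f : A → B → K} (hf : ∀ x, f x ∈ W) : (fun b => ∑ x, u x * f x b) ∈ W := by
  convert W.sum_mem (t := univ) fun x _ => W.smul_mem (u x) (hf x)
  simp [Finset.sum_apply]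

theorem Fintype.card_le_sum_finrank_of_eq_diagonal [DecidableEq A]
    (W₁ W₂ W₃ : Submodule K (A → K)) (T₁ T₂ T₃ : A → A → A → K) (c : A → K)
    (hc : ∀ x, c x ≠ 0) (h₁ : ∀ y z, (fun x => T₁ x y z) ∈ W₁)
    (h₂ : ∀ x z, (fun y => T₂ x y z) ∈ W₂) (h₃ : ∀ x y, (fun z => T₃ x y z) ∈ W₃)
    (hT : ∀ x y z, T₁ x y z + T₂ x y z + T₃ x y z = if x = y ∧ y = z then c x else 0) :
    Fintype.card A ≤ finrank K W₁ + finrank K W₂ + finrank K W₃ := by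
  classical
  obtain ⟨u, hu, hcard⟩ := W₁.exists_dotProduct_eq_zero_card_le
  -- Contracting the first slot against `u ⊥ W₁` kills `T₁` and leaves a diagonal matrix.
  let M : (A → A → A → K) → Matrix A A K := fun T => .of fun y z => ∑ x, u x * T x y z
  have hdiag : M T₂ + M T₃ = diagonal (u * c) := by
    ext y z
    have h₁' : ∑ x, u x * T₁ x y z = 0 := hu _ (h₁ y z)
    calc (M T₂ + M T₃) y z = ∑ x, u x * (T₁ x y z + T₂ x y z + T₃ x y z) := by
          simp [M, mul_add, sum_add_distrib, h₁']
      _ = diagonal (u * c) y z := by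
          simp_rw [hT, mul_ite, mul_zero]
          by_cases hyz : y = z
          · subst hyz; simp
          · simp [hyz]
  have hrank₂ : (M T₂).rank ≤ finrank K W₂ :=
    rank_le_finrank_of_col_mem fun z => W₂.sum_mul_apply_mem u fun x => h₂ x z
  have hrank₃ : (M T₃).rank ≤ finrank K W₃ :=
    rank_le_finrank_of_row_mem fun y => W₃.sum_mul_apply_mem u fun x => h₃ x y
  have hsupp : #{a | u a ≠ 0} = (diagonal (u * c)).rank := by
    rw [rank_diagonal, Fintype.card_subtype]
    simp [hc]
  have := hdiag ▸ rank_add_le (M T₂) (M T₃)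
  omega

theorem Finset.card_le_sum_finrank_of_eq_diagonal {V : Type*} [DecidableEq V] (S : Finset V)
    (W₁ W₂ W₃ : Submodule K (V → K)) [FiniteDimensional K W₁] [FiniteDimensional K W₂]
    [FiniteDimensional K W₃] (T₁ T₂ T₃ : V → V → V → K) (c : V → K)
    (hc : ∀ x ∈ S, c x ≠ 0) (h₁ : ∀ y z, (fun x => T₁ x y z) ∈ W₁)
    (h₂ : ∀ x z, (fun y => T₂ x y z) ∈ W₂) (h₃ : ∀ x y, (fun z => T₃ x y z) ∈ W₃)
    (hT : ∀ x ∈ S, ∀ y ∈ S, ∀ z ∈ S,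
      T₁ x y z + T₂ x y z + T₃ x y z = if x = y ∧ y = z then c x else 0) :
    #S ≤ finrank K W₁ + finrank K W₂ + finrank K W₃ := by
  let ρ : (V → K) →ₗ[K] (S → K) := LinearMap.funLeft K K Subtype.val
  have hS := Fintype.card_le_sum_finrank_of_eq_diagonal (W₁.map ρ) (W₂.map ρ) (W₃.map ρ)
    (fun x y z : S => T₁ x y z) (fun x y z => T₂ x y z) (fun x y z => T₃ x y z)
    (fun x => c x) (fun x => hc x x.2) (fun y z => Submodule.mem_map_of_mem (h₁ y z))
    (fun x z => Submodule.mem_map_of_mem (h₂ x z))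
    (fun x y => Submodule.mem_map_of_mem (h₃ x y))
    (fun x y z => by simpa only [Subtype.ext_iff] using hT x x.2 y y.2 z z.2)
  rw [Fintype.card_coe] at hS
  have := finrank_map_le ρ W₁
  have := finrank_map_le ρ W₂
  have := finrank_map_le ρ W₃
  omega

end SliceRank

theorem Submodule.finrank_span_range_pow_le {K R σ : Type*} [Field K] [CommRing R] [Algebra K R]
    [Fintype σ] (g : σ → R) (d : ℕ) :
    finrank K ↥(span K (Set.range g) ^ d) ≤ (Fintype.card σ + d - 1).choose d := by
  classical
  have hspan : span K (Set.range g) ^ d = span K ((fun m => aeval g (monomial m (1 : K))) ''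
      ((univ : Finset σ).finsuppAntidiag d : Set (σ →₀ ℕ))) := by
    calc span K (Set.range g) ^ d = (map (aeval g).toLinearMap (span K (Set.range X))) ^ d := by
          rw [map_span, ← Set.range_comp]; simp [Function.comp_def]
      _ = map (aeval g).toLinearMap (homogeneousSubmodule σ K d) := by
          rw [← Submodule.map_pow, ← homogeneousSubmodule_one_eq_span_X,
            homogeneousSubmodule_one_pow]
      _ = _ := by
          rw [homogeneousSubmodule_eq_finsupp_supported, AddMonoidAlgebra.supported_eq_span_single,
            map_span, Set.image_image]
          congr 1
          ext m
          simp [mem_finsuppAntidiag, Finsupp.degree_eq_sum, MvPolynomial.single_eq_monomial]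
  rw [hspan, ← coe_image]
  calc _ ≤ _ := finrank_span_finset_le_card _
    _ ≤ _ := card_image_le
    _ = _ := by rw [card_finsuppAntidiag_nat_eq_choose, card_univ]

section QuadSpan

variable (K ι : Type*) [Field K] [Fintype ι]

def quadGenerator : Option (Option ι) → (ι → K) → K
  | none => 1
  | some none => fun x => x ⬝ᵥ x
  | some (some i) => fun x => x i

/-- Its `d`-th power consists of the polynomials in `x` and `x ⬝ᵥ x` of total degree at most `d`,
the form `x ⬝ᵥ x` counting as a single variable of degree one. -/
def quadSpan : Submodule K ((ι → K) → K) :=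
  span K (Set.range (quadGenerator K ι))

theorem finrank_quadSpan_pow_le (d : ℕ) :
    finrank K ↥(quadSpan K ι ^ d) ≤ (Fintype.card ι + 1 + d).choose d := by
  have := finrank_span_range_pow_le (K := K) (quadGenerator K ι) d
  rwa [Fintype.card_option, Fintype.card_option, show Fintype.card ι + 1 + 1 + d - 1 =
    Fintype.card ι + 1 + d by omega] at this

variable {K ι}

theorem one_mem_quadSpan_pow (d : ℕ) : 1 ∈ quadSpan K ι ^ d := by
  have h1 : 1 ∈ quadSpan K ι := subset_span ⟨none, rfl⟩
  simpa only [one_pow] using Submodule.pow_mem_pow _ h1 d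

theorem dotProduct_sub_self_mem_quadSpan (c : ι → K) :
    (fun x => (x - c) ⬝ᵥ (x - c)) ∈ quadSpan K ι := by
  have hexpand : (fun x => (x - c) ⬝ᵥ (x - c)) = quadGenerator K ι (some none)
      - ∑ i, (2 * c i) • quadGenerator K ι (some (some i))
      + (c ⬝ᵥ c) • quadGenerator K ι none := by
    ext x
    simp only [quadGenerator, dotProduct, Pi.sub_apply, Pi.add_apply, Pi.smul_apply,
      Finset.sum_apply, Pi.one_apply, smul_eq_mul, ← sum_sub_distrib, sum_mul, ← sum_add_distrib]
    exact sum_congr rfl fun i _ => by ring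
  rw [hexpand]
  exact add_mem (sub_mem (subset_span ⟨_, rfl⟩)
    (sum_mem fun i _ => smul_mem _ _ (subset_span ⟨_, rfl⟩)))
    (smul_mem _ _ (subset_span ⟨_, rfl⟩))

theorem isotropyIndicator_mem_quadSpan_pow [Fintype K] [DecidableEq K] (c : ι → K) :
    (fun x => if (x - c) ⬝ᵥ (x - c) = 0 then 1 else 0) ∈
      quadSpan K ι ^ (Fintype.card K - 1) := by
  have hq : Fintype.card K - 1 ≠ 0 := by have := Fintype.one_lt_card (α := K); omega
  have hfermat : (fun x => if (x - c) ⬝ᵥ (x - c) = 0 then 1 else 0) =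
      1 - (fun x => (x - c) ⬝ᵥ (x - c)) ^ (Fintype.card K - 1) := by
    ext x
    simp only [Pi.sub_apply, Pi.pow_apply, Pi.one_apply]
    split_ifs with h
    · rw [h, zero_pow hq, sub_zero]
    · rw [FiniteField.pow_card_sub_one_eq_one _ h, sub_self]
  rw [hfermat]
  exact sub_mem (one_mem_quadSpan_pow _) (pow_mem_pow _ (dotProduct_sub_self_mem_quadSpan c) _)

end QuadSpan

/-- With `D` the indicator of `r` and `δ` that of equality, the left side is the tensor
`D(x,y) D(y,z) D(z,x) (1 - δ(x,y) - δ(y,z) - δ(z,x))`, rewritten using `D = 1` on the diagonal so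
that each summand is a function of one variable times a coefficient depending on the other two. -/
theorem indicator_triangle_identity {V R : Type*} [CommRing R] [DecidableEq V]
    {r : V → V → Prop} [DecidableRel r] (hrefl : ∀ x, r x x) (hsymm : ∀ x y, r x y → r y x)
    {x y z : V} (htri : x ≠ y → y ≠ z → z ≠ x → ¬(r x y ∧ r y z ∧ r z x)) :
    (if r x y then 1 else 0) * ((if r y z then 1 else 0) * (if r x z then 1 else 0)
        - if y = z then 1 else 0)
      + -(if z = x then 1 else 0) * (if r y z then 1 else 0)
      + -(if x = y then 1 else 0) * (if r z x then 1 else 0)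
      = (if x = y ∧ y = z then -2 else 0 : R) := by
  have hsymm' : ∀ a b, r a b ↔ r b a := fun a b => ⟨hsymm a b, hsymm b a⟩
  rcases eq_or_ne x y with rfl | hxy
  · rcases eq_or_ne x z with rfl | hxz
    · simp [hrefl]
      norm_num
    · by_cases h : r x z <;> simp [hrefl, hxz, hxz.symm, hsymm' z x, h]
  · rcases eq_or_ne y z with rfl | hyz
    · by_cases h : r x y <;> simp [hrefl, hxy, hxy.symm, h]
    · rcases eq_or_ne z x with rfl | hzx
      · by_cases h : r y z <;> simp [hrefl, hxy, hyz, hsymm' z y, h]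
      · simp [hxy, hyz, hzx, hsymm' x z]
        have := htri hxy hyz hzx
        tauto

section Isotropic

variable {K ι : Type*} [CommRing K] [NoZeroDivisors K] [Fintype ι]

theorem dotProduct_sub_eq_zero_of_isotropic (h2 : (2 : K) ≠ 0) {x y z : ι → K}
    (hxy : (x - y) ⬝ᵥ (x - y) = 0) (hyz : (y - z) ⬝ᵥ (y - z) = 0)
    (hzx : (z - x) ⬝ᵥ (z - x) = 0) : (x - y) ⬝ᵥ (y - z) = 0 := by
  have hpolar : (z - x) ⬝ᵥ (z - x) = (x - y) ⬝ᵥ (x - y) + 2 * ((x - y) ⬝ᵥ (y - z))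
      + (y - z) ⬝ᵥ (y - z) := by
    simp only [dotProduct, Pi.sub_apply, mul_sum, ← sum_add_distrib]
    exact sum_congr rfl fun i _ => by ring
  rw [hxy, hyz, hzx] at hpolar
  exact (mul_eq_zero.1 (by linear_combination -hpolar)).resolve_left h2

theorem all_right_of_isotropic (h2 : (2 : K) ≠ 0) {x y z : ι → K}
    (hxy : (x - y) ⬝ᵥ (x - y) = 0) (hyz : (y - z) ⬝ᵥ (y - z) = 0)
    (hzx : (z - x) ⬝ᵥ (z - x) = 0) :
    (x - y) ⬝ᵥ (y - z) = 0 ∧ (y - z) ⬝ᵥ (z - x) = 0 ∧ (z - x) ⬝ᵥ (x - y) = 0 :=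
  ⟨dotProduct_sub_eq_zero_of_isotropic h2 hxy hyz hzx,
    dotProduct_sub_eq_zero_of_isotropic h2 hyz hzx hxy,
    dotProduct_sub_eq_zero_of_isotropic h2 hzx hxy hyz⟩

end Isotropic

/-- if `A ⊆ F_q^n` contains no triangle with all right angles, then
`|A| ≤ C(n+2q-1, 2q-2) + 2·C(n+q, q-1)`. -/
theorem no_all_right_triangle_card_bound (q n : ℕ) (hq : q.Prime) (hodd : Odd q)
    (A : Finset (Fin n → ZMod q))
    (hA : ∀ x ∈ A, ∀ y ∈ A, ∀ z ∈ A, x ≠ y → y ≠ z → x ≠ z →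
      ¬ (∑ i, (x i - y i) * (y i - z i) = 0 ∧
         ∑ i, (y i - z i) * (z i - x i) = 0 ∧
         ∑ i, (z i - x i) * (x i - y i) = 0)) :
    A.card ≤ Nat.choose (n + 2 * q - 1) (2 * q - 2) + 2 * Nat.choose (n + q) (q - 1) := by
  have := Fact.mk hq
  have hq2 := hq.two_le
  have h2 : (2 : ZMod q) ≠ 0 := Ring.two_ne_zero <| by
    rw [ZMod.ringChar_zmod_n]; rintro rfl; exact Nat.not_odd_iff_even.2 even_two hodd
  let r (x y : Fin n → ZMod q) : Prop := (x - y) ⬝ᵥ (x - y) = 0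
  have hsymm (x y) (h : r x y) : r y x := by simpa only [r, ← neg_sub x y, neg_dotProduct_neg]
  have htri : ∀ x ∈ A, ∀ y ∈ A, ∀ z ∈ A, x ≠ y → y ≠ z → z ≠ x → ¬(r x y ∧ r y z ∧ r z x) :=
    fun x hx y hy z hz hxy hyz hzx ⟨h₁, h₂, h₃⟩ =>
      hA x hx y hy z hz hxy hyz hzx.symm (all_right_of_isotropic h2 h₁ h₂ h₃)
  let D (x y : Fin n → ZMod q) : ZMod q := if r x y then 1 else 0
  let δ (x y : Fin n → ZMod q) : ZMod q := if x = y then 1 else 0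
  let W := quadSpan (ZMod q) (Fin n) ^ (q - 1)
  have hD (c) : (fun x => D x c) ∈ W := by
    simpa only [ZMod.card] using isotropyIndicator_mem_quadSpan_pow (K := ZMod q) c
  have hWW : W * W = quadSpan (ZMod q) (Fin n) ^ (2 * q - 2) := by
    rw [← pow_add]; congr 1; omega
  have hcard := A.card_le_sum_finrank_of_eq_diagonal (W * W) W W
    (fun x y z => D x y * (D y z * D x z - δ y z)) (fun x y z => -δ z x * D y z)
    (fun x y z => -δ x y * D z x) (fun _ => -2) (fun _ _ => neg_ne_zero.2 h2)
    (fun y z => by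
      convert mul_mem_mul (hD y)
        (sub_mem (smul_mem W (D y z) (hD z)) (smul_mem W (δ y z) (one_mem_quadSpan_pow _)))
      simp)
    (fun x z => smul_mem W (-δ z x) (hD z)) (fun x y => smul_mem W (-δ x y) (hD x))
    (fun x hx y hy z hz => indicator_triangle_identity (by simp [r]) hsymm (htri x hx y hy z hz))
  have h₁ := finrank_quadSpan_pow_le (ZMod q) (Fin n) (2 * q - 2)
  have h₂ : finrank (ZMod q) W ≤ _ := finrank_quadSpan_pow_le (ZMod q) (Fin n) (q - 1)
  rw [Fintype.card_fin] at h₁ h₂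
  rw [hWW] at hcard
  rw [show n + 2 * q - 1 = n + 1 + (2 * q - 2) by omega, show n + q = n + 1 + (q - 1) by omega]
  omega
end

section
/- Let q be an odd prime with q dividing n, and let A ⊆ {a,b}^n be such that no two distinct elements of A have Hamming distance divisible by q. Then |A| ≤ C(n, q−1) + C(n, q−3) + ⋯ + C(n, 2) + C(n, 0). -/
/-!
Send a word `x` to its `±1` vector `v x` over `𝔽_q`. Then `⟪v x, v x⟫ = n = 0` while
`⟪v x, v y⟫ = n - 2 d(x, y) ≠ 0` for `x ≠ y`, so by Fermat `y ↦ 1 - ⟪v x, v y⟫ ^ (q - 1)` is the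
indicator of `x` on `A`. Expanding the power with `(v y)ᵢ² = 1` puts these `|A|` independent
functions in the span of the squarefree monomials in the coordinates of `v y` of even degree
at most `q - 1`, and there are `∑_{i even, i < q} C(n, i)` of those.
-/

open Finset

section ParityMonomials

variable (R : Type*) {M ι : Type*} [CommRing R] [CommRing M] [Algebra R M]

def parityMonomialSpan (c : ι → M) (m : ℕ) : Submodule R M :=
  Submodule.span R ((fun S : Finset ι => ∏ i ∈ S, c i) '' {S | S.card ≤ m ∧ S.card % 2 = m % 2})

variable {R} {c : ι → M}

theorem mul_prod_eq_prod_symmDiff [DecidableEq ι] (hc : ∀ i, c i * c i = 1) (j : ι)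
    (S : Finset ι) :
    c j * ∏ i ∈ S, c i = ∏ i ∈ if j ∈ S then S.erase j else insert j S, c i := by
  split_ifs with hj
  · rw [← mul_prod_erase S c hj, ← mul_assoc, hc, one_mul]
  · rw [prod_insert hj]

theorem mul_mem_parityMonomialSpan_succ [DecidableEq ι] (hc : ∀ i, c i * c i = 1) (j : ι)
    {m : ℕ} {f : M} (hf : f ∈ parityMonomialSpan R c m) :
    c j * f ∈ parityMonomialSpan R c (m + 1) := by
  let mulLeft : M →ₗ[R] M := LinearMap.mulLeft R (c j)
  suffices parityMonomialSpan R c m ≤ (parityMonomialSpan R c (m + 1)).comap mulLeft from this hf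
  refine Submodule.span_le.2 ?_
  rintro _ ⟨S, ⟨hSm, hSpar⟩, rfl⟩
  refine Submodule.subset_span ⟨_, ?_, (mul_prod_eq_prod_symmDiff hc j S).symm⟩
  split_ifs with hj
  · have := card_pos.2 ⟨j, hj⟩
    simp only [Set.mem_ofPred_eq, card_erase_of_mem hj]
    omega
  · simp only [Set.mem_ofPred_eq, card_insert_of_notMem hj]
    omega

theorem sum_smul_pow_mem_parityMonomialSpan [Fintype ι] [DecidableEq ι]
    (hc : ∀ i, c i * c i = 1) (u : ι → R) (m : ℕ) :
    (∑ i, u i • c i) ^ m ∈ parityMonomialSpan R c m := by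
  induction m with
  | zero => exact Submodule.subset_span ⟨∅, by simp⟩
  | succ m ih =>
    rw [pow_succ', sum_mul]
    exact Submodule.sum_mem _ fun i _ => by
      rw [smul_mul_assoc]
      exact Submodule.smul_mem _ _ (mul_mem_parityMonomialSpan_succ hc i ih)

theorem parityMonomialSpan_le_span_image_even [Fintype ι] [DecidableEq M] {m : ℕ} (hm : Even m) :
    parityMonomialSpan R c m ≤ Submodule.span R
      ((univ.filter fun S => S.card ∈ (range (m + 1)).filter Even).image (fun S => ∏ i ∈ S, c i) :
        Set M) := by
  refine Submodule.span_mono ?_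
  rintro _ ⟨S, ⟨hSm, hSpar⟩, rfl⟩
  refine mem_coe.2 (mem_image_of_mem _ ?_)
  simp only [mem_filter, mem_univ, mem_range, true_and, Nat.even_iff] at hm ⊢
  omega

end ParityMonomials

theorem card_le_card_of_single_mem_span {K ι : Type*} [Field K] [Fintype ι] [DecidableEq ι]
    (s : Finset (ι → K)) (hs : ∀ x, Pi.single x 1 ∈ Submodule.span K (s : Set (ι → K))) :
    Fintype.card ι ≤ s.card := by
  have htop : Submodule.span K (s : Set (ι → K)) = ⊤ := by
    rw [eq_top_iff, ← (Pi.basisFun K ι).span_eq, Submodule.span_le]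
    rintro _ ⟨x, rfl⟩
    simpa using hs x
  calc Fintype.card ι = Module.finrank K (ι → K) := (Module.finrank_fintype_fun_eq_card K).symm
    _ = (s : Set (ι → K)).finrank K := by rw [Set.finrank, htop, finrank_top]
    _ ≤ s.card := finrank_span_finset_le_card s

theorem card_filter_card_mem (ι : Type*) [Fintype ι] (t : Finset ℕ) :
    (univ.filter fun S : Finset ι => S.card ∈ t).card = ∑ i ∈ t, (Fintype.card ι).choose i := by
  rw [card_eq_sum_card_fiberwise (f := card) (t := t) fun S hS => by simpa using hS]
  refine sum_congr rfl fun i hi => ?_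
  rw [← card_univ, ← card_powersetCard]
  congr 1
  ext S
  simp only [mem_filter, mem_univ, true_and, mem_powersetCard_univ]
  exact ⟨And.right, fun h => ⟨h ▸ hi, h⟩⟩

section SignVector

variable {α ι : Type*} [DecidableEq α]

def signVector (R : Type*) [Ring R] (a : α) (x : ι → α) : ι → R :=
  fun i => if x i = a then 1 else -1

theorem signVector_mul_self {R : Type*} [Ring R] (a : α) (x : ι → α) (i : ι) :
    signVector R a x i * signVector R a x i = 1 := by
  unfold signVector
  split_ifs <;> simp

theorem sum_signVector_mul {R : Type*} [CommRing R] [Fintype ι] {a b : α} {x y : ι → α}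
    (hx : ∀ i, x i = a ∨ x i = b) (hy : ∀ i, y i = a ∨ y i = b) :
    ∑ i, signVector R a x i * signVector R a y i = Fintype.card ι - 2 * hammingDist x y := by
  have hterm : ∀ i,
      signVector R a x i * signVector R a y i = 1 - 2 * if x i ≠ y i then 1 else 0 := by
    intro i
    by_cases hxy : x i = y i
    · simp only [signVector, hxy, ne_eq, not_true_eq_false, if_false]
      split_ifs <;> ring
    · rw [if_pos hxy]
      have hsign : (x i = a ∧ y i ≠ a) ∨ (x i ≠ a ∧ y i = a) := by
        by_cases h : x i = a
        · exact Or.inl ⟨h, fun h' => hxy (h.trans h'.symm)⟩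
        · refine Or.inr ⟨h, by_contra fun h' => hxy ?_⟩
          rw [(hx i).resolve_left h, (hy i).resolve_left h']
      rcases hsign with ⟨h, h'⟩ | ⟨h, h'⟩ <;>
        simp only [signVector, h, h', if_true, if_false] <;> ring
  simp only [hterm, sum_sub_distrib, ← mul_sum, sum_boole, sum_const, card_univ, nsmul_eq_mul,
    mul_one, hammingDist]

theorem sum_signVector_mul_pow_card_sub_one {q : ℕ} [Fact q.Prime] (hq2 : q ≠ 2) [Fintype ι]
    (hqι : q ∣ Fintype.card ι) {a b : α} {x y : ι → α}
    (hx : ∀ i, x i = a ∨ x i = b) (hy : ∀ i, y i = a ∨ y i = b)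
    (hxy : x ≠ y → ¬ q ∣ hammingDist x y) :
    (∑ i, signVector (ZMod q) a x i * signVector (ZMod q) a y i) ^ (q - 1) =
      if x = y then 0 else 1 := by
  rw [sum_signVector_mul hx hy, (ZMod.natCast_eq_zero_iff _ _).2 hqι, zero_sub]
  split_ifs with h
  · subst h
    rw [hammingDist_self, Nat.cast_zero, mul_zero, neg_zero,
      zero_pow (Nat.sub_ne_zero_of_lt (Fact.out : q.Prime).one_lt)]
  · refine ZMod.pow_card_sub_one_eq_one (neg_ne_zero.2 ?_)
    have h2d : ¬ q ∣ 2 * hammingDist x y := fun hdvd =>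
      ((Fact.out : q.Prime).dvd_mul.1 hdvd).elim
        (fun h2 => hq2 ((Nat.prime_dvd_prime_iff_eq Fact.out Nat.prime_two).1 h2)) (hxy h)
    exact_mod_cast (ZMod.natCast_eq_zero_iff _ _).not.2 h2d

theorem single_eq_one_sub_sum_signVector_pow {q : ℕ} [Fact q.Prime] (hq2 : q ≠ 2) [Fintype ι]
    (hqι : q ∣ Fintype.card ι) {a b : α} {A : Finset (ι → α)}
    (hA : ∀ x ∈ A, ∀ i, x i = a ∨ x i = b)
    (hd : ∀ x ∈ A, ∀ y ∈ A, x ≠ y → ¬ q ∣ hammingDist x y) (x : A) :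
    Pi.single x 1 = 1 - (∑ i, signVector (ZMod q) a (x : ι → α) i •
      fun y : A => signVector (ZMod q) a (y : ι → α) i) ^ (q - 1) := by
  funext y
  simp only [Pi.single_apply, Pi.sub_apply, Pi.one_apply, Finset.sum_apply, Pi.pow_apply,
    Pi.smul_apply, smul_eq_mul]
  rw [sum_signVector_mul_pow_card_sub_one hq2 hqι (hA x x.2) (hA y y.2) (hd x x.2 y y.2)]
  by_cases h : y = x
  · simp [h]
  · simp [h, Subtype.coe_ne_coe.2 (Ne.symm h)]

end SignVector

theorem binary_code_upper_bound_q_dvd_n_general (q n : ℕ) (hq : q.Prime) (hodd : Odd q)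
    (hqn : q ∣ n)
    (α : Type*) [DecidableEq α] (a b : α)
    (A : Finset (Fin n → α))
    (halph : ∀ x ∈ A, ∀ i, x i = a ∨ x i = b)
    (hd : ∀ x ∈ A, ∀ y ∈ A, x ≠ y →
      ¬ (q ∣ (Finset.univ.filter (fun i => x i ≠ y i)).card)) :
    A.card ≤ ∑ i ∈ (Finset.range q).filter (fun i => Even i), Nat.choose n i := by
  have := Fact.mk hq
  have hq2 : q ≠ 2 := by
    rintro rfl
    exact Nat.not_odd_iff_even.2 even_two hodd
  let c : Fin n → (A → ZMod q) := fun i y => signVector (ZMod q) a (y : Fin n → α) i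
  have hc : ∀ i, c i * c i = 1 := fun i => funext fun y => signVector_mul_self a (y : Fin n → α) i
  let T := univ.filter fun S : Finset (Fin n) => S.card ∈ (range q).filter Even
  have hspan : ∀ x : A, Pi.single x 1 ∈
      Submodule.span (ZMod q) (T.image (fun S => ∏ i ∈ S, c i) : Set (A → ZMod q)) := by
    intro x
    have hle := parityMonomialSpan_le_span_image_even (R := ZMod q) (c := c)
      (Nat.Odd.sub_odd hodd odd_one)
    rw [Nat.sub_add_cancel hq.one_le] at hle
    rw [single_eq_one_sub_sum_signVector_pow hq2 (by simpa using hqn) halph hd x]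
    refine sub_mem (Submodule.subset_span ?_) (hle (sum_smul_pow_mem_parityMonomialSpan hc _ _))
    exact mem_coe.2 (mem_image.2 ⟨∅, by simp [T, hq.pos], prod_empty⟩)
  calc A.card = Fintype.card A := (Fintype.card_coe A).symm
    _ ≤ (T.image fun S => ∏ i ∈ S, c i).card := card_le_card_of_single_mem_span _ hspan
    _ ≤ T.card := card_image_le
    _ = ∑ i ∈ (Finset.range q).filter (fun i => Even i), Nat.choose n i := by
      rw [card_filter_card_mem, Fintype.card_fin]

/-- if moreover `q ∣ n`, the bound improves to the sum of
`C(n,i)` over even `i ≤ q-1`. -/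
theorem binary_code_upper_bound_q_dvd_n (q n : ℕ) (hq : q.Prime) (hodd : Odd q)
    (hqn : q ∣ n)
    (α : Type*) [DecidableEq α] (a b : α) (hab : a ≠ b)
    (A : Finset (Fin n → α))
    (halph : ∀ x ∈ A, ∀ i, x i = a ∨ x i = b)
    (hd : ∀ x ∈ A, ∀ y ∈ A, x ≠ y →
      ¬ (q ∣ (Finset.univ.filter (fun i => x i ≠ y i)).card)) :
    A.card ≤ ∑ i ∈ (Finset.range q).filter (fun i => Even i), Nat.choose n i :=
  binary_code_upper_bound_q_dvd_n_general q n hq hodd hqn α a b A halph hd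
end
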